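/- With h_i = x_i − μ, the second von Mises derivative of the r-th central moment functional μ_r(F) is μ_{r·12}(x₁,x₂) = −r[(h₁^{r−1} − μ_{r−1})h₂ + (h₂^{r−1} − μ_{r−1})h₁] + r(r−1) h₁ h₂ μ_{r−2}, where the second derivative is computed from the first derivative via the rule (T_{·1})_{·2} = T_{·12} − T_{·2}. -/

import Mathlib

open MeasureTheory Filter Topology

/-- The mean of a measure on `ℝ`. -/
noncomputable def m1 (G : MeasureTheory.Measure ℝ) : ℝ := ∫ x, x ∂G

/-- The `k`-th central moment of a measure on `ℝ` about its own mean. -/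
noncomputable def cm (G : MeasureTheory.Measure ℝ) (k : ℕ) : ℝ :=
  ∫ x, (x - m1 G) ^ k ∂G

/-- The contaminated measure `(1-ε)F + ε δ_y`. -/
noncomputable def mix (F : MeasureTheory.Measure ℝ) (y : ℝ) (ε : ℝ) :
    MeasureTheory.Measure ℝ :=
  ENNReal.ofReal (1 - ε) • F + ENNReal.ofReal ε • MeasureTheory.Measure.dirac y

/-- The first von Mises derivative (influence function) of `μ_r`, as a functional of `G`:
`μ_{r·1}(G)(x) = (x−μ(G))^r − μ_r(G) − r (x−μ(G)) μ_{r−1}(G)`. -/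
noncomputable def cmIF (r : ℕ) (G : MeasureTheory.Measure ℝ) (x : ℝ) : ℝ :=
  (x - m1 G) ^ r - cm G r - r * (x - m1 G) * cm G (r - 1)

/-!
Along the contamination path `ε ↦ (1-ε)F + εδ_y`, `ε ∈ [0,1]`, the mean is affine in `ε` and
each central moment is `(1-ε)∫(x - μ - εh)^k dF + ε((1-ε)h)^k` with `h = y - μ`, a polynomial
in `ε` once `(x - μ - εh)^k` is expanded binomially. Differentiating at `ε = 0` shows that the
derivative of `μ_k` along the path is the influence function `μ_{k·1}(y)`; the second derivative
then follows from the chain rule applied to the formula for `μ_{r·1}(G)(x)`.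
-/

open Finset Set

section Contamination

variable {F : Measure ℝ} {y ε : ℝ}

lemma mix_zero : mix F y 0 = F := by
  simp [mix]

lemma integral_mix {f : ℝ → ℝ} (hf : Integrable f F) (h0 : 0 ≤ ε) (h1 : ε ≤ 1) :
    ∫ x, f x ∂(mix F y ε) = (1 - ε) * ∫ x, f x ∂F + ε * f y := by
  have hdirac : Integrable f (Measure.dirac y) := integrable_dirac enorm_lt_top
  rw [mix, integral_add_measure (hf.smul_measure ENNReal.ofReal_ne_top)
    (hdirac.smul_measure ENNReal.ofReal_ne_top), integral_smul_measure, integral_smul_measure,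
    integral_dirac, ENNReal.toReal_ofReal (by linarith), ENNReal.toReal_ofReal h0,
    smul_eq_mul, smul_eq_mul]

lemma m1_mix (hF : Integrable (fun x : ℝ => x) F) (h0 : 0 ≤ ε) (h1 : ε ≤ 1) :
    m1 (mix F y ε) = m1 F + ε * (y - m1 F) := by
  rw [m1, integral_mix hF h0 h1, m1]
  ring

lemma integrable_sub_pow {k : ℕ} (hint : ∀ i ≤ k, Integrable (fun x : ℝ => x ^ i) F) (c : ℝ) :
    Integrable (fun x : ℝ => (x - c) ^ k) F := by
  simp_rw [sub_eq_add_neg, add_pow]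
  exact integrable_finsetSum _ fun i hi =>
    ((hint i (Nat.lt_succ_iff.mp (mem_range.mp hi))).mul_const _).mul_const _

lemma cm_mix {k : ℕ} (hF : Integrable (fun x : ℝ => x) F)
    (hint : ∀ i ≤ k, Integrable (fun x : ℝ => x ^ i) F) (h0 : 0 ≤ ε) (h1 : ε ≤ 1) :
    cm (mix F y ε) k
      = (1 - ε) * ∫ x, (x - m1 F - ε * (y - m1 F)) ^ k ∂F + ε * ((1 - ε) * (y - m1 F)) ^ k := by
  have hshift : ∀ x, x - m1 (mix F y ε) = x - m1 F - ε * (y - m1 F) := fun x => by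
    rw [m1_mix hF h0 h1]; ring
  have hf : Integrable (fun x => (x - m1 F - ε * (y - m1 F)) ^ k) F := by
    simpa only [sub_sub] using integrable_sub_pow hint (m1 F + ε * (y - m1 F))
  simp_rw [cm, hshift, integral_mix hf h0 h1]
  ring

end Contamination

/-- Only the linear term of the binomial expansion of `(x - c - t)^k` in `t` survives
differentiation at `t = 0`. -/
lemma hasDerivAt_integral_sub_pow {F : Measure ℝ} {k : ℕ}
    (hint : ∀ i ≤ k, Integrable (fun x : ℝ => x ^ i) F) (c : ℝ) :
    HasDerivAt (fun t => ∫ x, (x - c - t) ^ k ∂F) (-k * ∫ x, (x - c) ^ (k - 1) ∂F) 0 := by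
  set b : ℕ → ℝ := fun j => (∫ x, (x - c) ^ (k - j) ∂F) * k.choose j
  have hexpand : (fun t => ∫ x, (x - c - t) ^ k ∂F)
      = fun t => ∑ j ∈ range (k + 1), (-t) ^ j * b j := by
    funext t
    have hbinom : ∀ x, (x - c - t) ^ k
        = ∑ j ∈ range (k + 1), (-t) ^ j * ((x - c) ^ (k - j) * k.choose j) := fun x => by
      rw [show x - c - t = -t + (x - c) by ring, add_pow]
      exact sum_congr rfl fun j _ => by ring
    simp_rw [hbinom]
    rw [integral_finsetSum _ fun j hj => ((integrable_sub_pow (fun i hi => hint i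
      (hi.trans (Nat.sub_le k j))) c).mul_const _).const_mul _]
    exact sum_congr rfl fun j _ => by rw [integral_const_mul, integral_mul_const]
  have hterm : ∀ j ∈ range (k + 1), HasDerivAt (fun t : ℝ => (-t) ^ j * b j)
      (j * (-0 : ℝ) ^ (j - 1) * (-1) * b j) 0 := fun j _ =>
    ((hasDerivAt_neg 0).pow j).mul_const (b j)
  rw [hexpand]
  refine (HasDerivAt.fun_sum hterm).congr_deriv ?_
  rw [sum_eq_single 1]
  · simp [b, mul_comm]
  · intro j _ hj
    rcases Nat.lt_or_gt_of_ne hj with hj0 | hj2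
    · simp [Nat.lt_one_iff.mp hj0]
    · simp [zero_pow (show j - 1 ≠ 0 by omega)]
  · intro h1_notMem
    have hk : k = 0 := by simpa using h1_notMem
    simp [b, hk]

section Derivatives

variable {F : Measure ℝ} (y : ℝ)

lemma hasDerivWithinAt_m1_mix (hF : Integrable (fun x : ℝ => x) F) :
    HasDerivWithinAt (fun ε => m1 (mix F y ε)) (y - m1 F) (Ici 0) 0 := by
  have hlin : HasDerivWithinAt (fun ε => m1 F + ε * (y - m1 F)) (y - m1 F) (Ici 0) 0 := by
    simpa using ((hasDerivAt_id (0 : ℝ)).mul_const (y - m1 F)).hasDerivWithinAt.const_add (m1 F)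
  refine hlin.congr_of_eventuallyEq ?_ (by simp [mix_zero])
  filter_upwards [Icc_mem_nhdsGE zero_lt_one] with ε hε
  exact m1_mix hF hε.1 hε.2

lemma hasDerivWithinAt_cm_mix {k : ℕ} (hF : Integrable (fun x : ℝ => x) F)
    (hint : ∀ i ≤ k, Integrable (fun x : ℝ => x ^ i) F) :
    HasDerivWithinAt (fun ε => cm (mix F y ε) k) (cmIF k F y) (Ici 0) 0 := by
  set h := y - m1 F
  have hmoment : HasDerivAt (fun ε => ∫ x, (x - m1 F - ε * h) ^ k ∂F)
      (-k * cm F (k - 1) * h) 0 := by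
    have hS := hasDerivAt_integral_sub_pow hint (m1 F)
    rw [← zero_mul h] at hS
    simpa [cm, Function.comp_def, mul_comm] using hS.comp 0 (hasDerivAt_mul_const h)
  have hpoly : HasDerivAt
      (fun ε => (1 - ε) * ∫ x, (x - m1 F - ε * h) ^ k ∂F + ε * ((1 - ε) * h) ^ k)
      (cmIF k F y) 0 := by
    have hone : HasDerivAt (fun ε : ℝ => 1 - ε) (-1) 0 := (hasDerivAt_id 0).const_sub 1
    refine ((hone.mul hmoment).add
      ((hasDerivAt_id 0).mul ((hone.mul_const h).pow k))).congr_deriv ?_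
    simp only [zero_mul, sub_zero, neg_mul, one_mul, cm, mul_neg, Pi.pow_apply, neg_sub, add_zero,
      cmIF, h]
    ring
  refine hpoly.hasDerivWithinAt.congr_of_eventuallyEq ?_ (by simp [mix_zero, cm])
  filter_upwards [Icc_mem_nhdsGE zero_lt_one] with ε hε
  exact cm_mix hF hint hε.1 hε.2

lemma hasDerivWithinAt_cmIF_mix {r : ℕ} (hr : 1 ≤ r)
    (hint : ∀ k ≤ r, Integrable (fun x : ℝ => x ^ k) F) (x : ℝ) :
    HasDerivWithinAt (fun ε => cmIF r (mix F y ε) x)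
      ((-(r : ℝ) * (((x - m1 F) ^ (r - 1) - cm F (r - 1)) * (y - m1 F)
          + ((y - m1 F) ^ (r - 1) - cm F (r - 1)) * (x - m1 F))
        + r * (r - 1) * (x - m1 F) * (y - m1 F) * cm F (r - 2))
        - cmIF r F y) (Ici 0) 0 := by
  have hF : Integrable (fun x : ℝ => x) F := by simpa using hint 1 hr
  have hcentre := (hasDerivWithinAt_m1_mix y hF).const_sub x
  have hcm := hasDerivWithinAt_cm_mix y hF hint
  have hcm' := hasDerivWithinAt_cm_mix (k := r - 1) y hF fun i hi => hint i (by omega)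
  refine (((hcentre.pow r).sub hcm).sub ((hcentre.const_mul (r : ℝ)).mul hcm')).congr_deriv ?_
  simp only [cmIF, mix_zero, show r - 1 - 1 = r - 2 by omega, Nat.cast_sub hr]
  push_cast
  ring

end Derivatives

theorem second_von_mises_derivative_of_central_moment_general
    (F : MeasureTheory.Measure ℝ)
    (r : ℕ) (hr : 1 ≤ r)
    (hint : ∀ k ≤ r, Integrable (fun x : ℝ => x ^ k) F) (x₁ x₂ : ℝ) :
    Tendsto (fun ε : ℝ => (cmIF r (mix F x₂ ε) x₁ - cmIF r F x₁) / ε)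
      (𝓝[>] 0)
      (𝓝 ((-(r : ℝ) * (((x₁ - m1 F) ^ (r - 1) - cm F (r - 1)) * (x₂ - m1 F)
              + ((x₂ - m1 F) ^ (r - 1) - cm F (r - 1)) * (x₁ - m1 F))
            + r * (r - 1) * (x₁ - m1 F) * (x₂ - m1 F) * cm F (r - 2))
          - cmIF r F x₂)) := by
  have hslope := (hasDerivWithinAt_iff_tendsto_slope' (lt_irrefl 0)).mp
    (hasDerivWithinAt_cmIF_mix x₂ hr hint x₁).Ioi_of_Ici
  refine hslope.congr fun ε => ?_
  rw [slope_def_field, mix_zero, sub_zero]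

/-- The second von Mises derivative of the `r`-th central moment functional is
`μ_{r·12}(x₁,x₂) = −r[(h₁^{r−1} − μ_{r−1})h₂ + (h₂^{r−1} − μ_{r−1})h₁] + r(r−1)h₁h₂μ_{r−2}`,
where the second derivative is computed from the first via the rule
`(T_{·1})_{·2} = T_{·12} − T_{·2}`: the Gateaux derivative in direction `δ_{x₂}` of
`F ↦ T_F(x₁)` equals `T_{·12}(x₁,x₂) − T_{·2}(x₂)`. -/
theorem second_von_mises_derivative_of_central_moment
    (F : MeasureTheory.Measure ℝ) [IsProbabilityMeasure F]
    (r : ℕ) (hr : 1 ≤ r)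
    (hint : ∀ k ≤ r, Integrable (fun x : ℝ => x ^ k) F) (x₁ x₂ : ℝ) :
    Tendsto (fun ε : ℝ => (cmIF r (mix F x₂ ε) x₁ - cmIF r F x₁) / ε)
      (𝓝[>] 0)
      (𝓝 ((-(r : ℝ) * (((x₁ - m1 F) ^ (r - 1) - cm F (r - 1)) * (x₂ - m1 F)
              + ((x₂ - m1 F) ^ (r - 1) - cm F (r - 1)) * (x₁ - m1 F))
            + r * (r - 1) * (x₁ - m1 F) * (x₂ - m1 F) * cm F (r - 2))
          - cmIF r F x₂)) :=
  second_von_mises_derivative_of_central_moment_general F r hr hint x₁ x₂
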